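/- Let a_X, a_Y > −1, b_X, b_Y > 0, and let X and Y be independent random variables, where X is the square of a Gamma(a_X+1, b_X) random variable and Y is the square of a Gamma(a_Y+1, b_Y) random variable. Let λ, β, P, c, a_φ > 0 and a target rate R > 0, and set the OMA threshold γ^{OMA} = 2^{2R} − 1. Then ℙ( β·P·a_φ·X·Y/(λ·c) < γ^{OMA} ) = (1/Γ(a_X+1)) ∫_0^∞ t^{a_X}·e^{−t} · (γ(a_Y+1, √(λ·γ^{OMA}·c/(β·P·a_φ))/(b_X·b_Y·t))/Γ(a_Y+1)) dt, where γ(s,x) = ∫_0^x u^{s−1}·e^{−u} du is the lower incomplete gamma function. -/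

import Mathlib

/-!
If `U` has density `u ^ a * exp (-u) / Γ(a + 1)` on `(0, ∞)`, then `(b * U) ^ 2` has density
`sqGammaDensity a b`: the substitution `x = (b * u) ^ 2` turns every integral against the law of a
squared Gamma variable into one against the standard Gamma density, and in particular gives
`ℙ(Y < (b * z) ^ 2) = γ(a + 1, z) / Γ(a + 1)`. The outage event is `X * Y < K` with
`K = λ γ c / (β P a_φ)`; by independence its probability is the integral over the law of `X` of
`ℙ(x * Y < K)`, and at `x = (b_X * t) ^ 2` this is `ℙ(Y < (b_Y * z) ^ 2)` with
`z = √K / (b_X b_Y t)`.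
-/

open MeasureTheory ProbabilityTheory

/-- Density of the square of a `Gamma(a+1, b)` random variable:
`x ↦ x^{(a−1)/2}·e^{−√x/b}/(2·b^{a+1}·Γ(a+1))` on `(0,∞)`. -/
noncomputable def sqGammaDensity (a b x : ℝ) : ℝ :=
  if 0 < x then
    x ^ ((a - 1) / 2) * Real.exp (-Real.sqrt x / b) / (2 * b ^ (a + 1) * Real.Gamma (a + 1))
  else 0

/-- The lower incomplete gamma function `γ(s, x) = ∫_0^x u^{s−1}·e^{−u} du`. -/
noncomputable def lincGamma (s x : ℝ) : ℝ :=
  ∫ u in (0 : ℝ)..x, u ^ (s - 1) * Real.exp (-u)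

open Set ENNReal

theorem lintegral_Ioi_eq_lintegral_Ioi_comp_mul_sq {b : ℝ} (hb : 0 < b) (g : ℝ → ℝ≥0∞) :
    ∫⁻ x in Ioi 0, g x = ∫⁻ u in Ioi 0, ENNReal.ofReal (2 * b ^ 2 * u) * g ((b * u) ^ 2) := by
  have himage : (fun u : ℝ => (b * u) ^ 2) '' Ioi 0 = Ioi 0 := by
    ext x
    refine ⟨fun ⟨u, (hu : 0 < u), hux⟩ => hux ▸ (by positivity : (0 : ℝ) < (b * u) ^ 2),
      fun (hx : 0 < x) => ⟨Real.sqrt x / b, div_pos (Real.sqrt_pos.2 hx) hb, ?_⟩⟩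
    simp only [mul_div_cancel₀ _ hb.ne', Real.sq_sqrt hx.le]
  have hmono : MonotoneOn (fun u : ℝ => (b * u) ^ 2) (Ioi 0) := fun u hu v _ huv =>
    pow_le_pow_left₀ (mul_pos hb hu).le (mul_le_mul_of_nonneg_left huv hb.le) 2
  have hderiv : ∀ u ∈ Ioi (0 : ℝ),
      HasDerivWithinAt (fun u : ℝ => (b * u) ^ 2) (2 * b ^ 2 * u) (Ioi 0) u := fun u _ =>
    (((hasDerivAt_id' u).const_mul b).pow 2).hasDerivWithinAt.congr_deriv (by ring)
  rw [← lintegral_image_eq_lintegral_deriv_mul_of_monotoneOn measurableSet_Ioi hderiv hmono,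
    himage]

theorem rpow_mul_exp_neg_div_Gamma_eq_mul_sqGammaDensity {a b u : ℝ} (hb : 0 < b) (hu : 0 < u) :
    u ^ a * Real.exp (-u) / Real.Gamma (a + 1)
      = 2 * b ^ 2 * u * sqGammaDensity a b ((b * u) ^ 2) := by
  have hbu : 0 < b * u := mul_pos hb hu
  have hsqrt : Real.sqrt ((b * u) ^ 2) = b * u := Real.sqrt_sq hbu.le
  have hrpow : ((b * u) ^ 2) ^ ((a - 1) / 2) = b ^ (a - 1) * u ^ (a - 1) := by
    rw [← Real.rpow_natCast, ← Real.rpow_mul hbu.le, Real.mul_rpow hb.le hu.le]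
    norm_num [show (2 : ℝ) * ((a - 1) / 2) = a - 1 by ring]
  have hb_pow : b ^ (a + 1) = b ^ (a - 1) * b ^ 2 := by
    rw [← Real.rpow_natCast, ← Real.rpow_add hb]
    norm_num [show a + 1 = a - 1 + 2 by ring]
  have hu_pow : u ^ a = u ^ (a - 1) * u := by
    rw [← Real.rpow_add_one hu.ne', sub_add_cancel]
  rw [sqGammaDensity, if_pos (by positivity), hsqrt, hrpow, hb_pow, hu_pow,
    show -(b * u) / b = -u by field_simp]
  have : 0 < b ^ (a - 1) := Real.rpow_pos_of_pos hb _
  field_simp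

theorem measurable_sqGammaDensity (a b : ℝ) : Measurable (sqGammaDensity a b) :=
  Measurable.ite measurableSet_Ioi (by fun_prop) measurable_const

theorem lintegral_withDensity_sqGammaDensity {a b : ℝ} (hb : 0 < b) (g : ℝ → ℝ≥0∞) :
    ∫⁻ x, g x ∂volume.withDensity (fun x => ENNReal.ofReal (sqGammaDensity a b x))
      = ∫⁻ u in Ioi 0,
          ENNReal.ofReal (u ^ a * Real.exp (-u) / Real.Gamma (a + 1)) * g ((b * u) ^ 2) := by
  have hsupport : Function.support
      ((fun x => ENNReal.ofReal (sqGammaDensity a b x)) * g) ⊆ Ioi 0 := fun x hx => by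
    by_contra hx0
    simp [sqGammaDensity, show ¬0 < x from hx0] at hx
  rw [lintegral_withDensity_eq_lintegral_mul_non_measurable _
      (measurable_sqGammaDensity a b).ennreal_ofReal (ae_of_all _ fun _ => ofReal_lt_top),
    ← setLIntegral_eq_of_support_subset hsupport, lintegral_Ioi_eq_lintegral_Ioi_comp_mul_sq hb]
  refine setLIntegral_congr_fun measurableSet_Ioi fun u (hu : 0 < u) => ?_
  rw [rpow_mul_exp_neg_div_Gamma_eq_mul_sqGammaDensity hb hu,
    ENNReal.ofReal_mul (p := 2 * b ^ 2 * u) (by positivity), Pi.mul_apply,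
    mul_assoc _ (ENNReal.ofReal _)]

theorem intervalIntegrable_rpow_mul_exp_neg {a : ℝ} (ha : -1 < a) (z₁ z₂ : ℝ) :
    IntervalIntegrable (fun u => u ^ a * Real.exp (-u)) volume z₁ z₂ :=
  (intervalIntegral.intervalIntegrable_rpow' ha).mul_continuousOn (by fun_prop)

theorem lincGamma_nonneg (s : ℝ) {z : ℝ} (hz : 0 ≤ z) : 0 ≤ lincGamma s z :=
  intervalIntegral.integral_nonneg hz fun u hu => by
    have : 0 ≤ u := hu.1
    positivity

theorem lincGamma_monotoneOn {a : ℝ} (ha : -1 < a) : MonotoneOn (lincGamma (a + 1)) (Ici 0) :=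
  fun x hx y _ hxy => by
    simp only [lincGamma, add_sub_cancel_right]
    refine intervalIntegral.integral_mono_interval le_rfl hx hxy ?_
      (intervalIntegrable_rpow_mul_exp_neg ha 0 y)
    filter_upwards [ae_restrict_mem measurableSet_Ioc] with u hu
    have : 0 < u := hu.1
    positivity

theorem ofReal_lincGamma_div_Gamma {a z : ℝ} (ha : -1 < a) (hz : 0 ≤ z) :
    ENNReal.ofReal (lincGamma (a + 1) z / Real.Gamma (a + 1))
      = ∫⁻ u in Ioo 0 z, ENNReal.ofReal (u ^ a * Real.exp (-u) / Real.Gamma (a + 1)) := by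
  have hint : IntegrableOn (fun u => u ^ a * Real.exp (-u)) (Ioo 0 z) :=
    (intervalIntegrable_iff_integrableOn_Ioo_of_le hz).1
      (intervalIntegrable_rpow_mul_exp_neg ha 0 z)
  rw [← ofReal_integral_eq_lintegral_ofReal (hint.div_const _), integral_div, lincGamma,
    intervalIntegral.integral_of_le hz, integral_Ioc_eq_integral_Ioo, add_sub_cancel_right]
  have := Real.Gamma_pos_of_pos (by linarith : 0 < a + 1)
  filter_upwards [ae_restrict_mem measurableSet_Ioo] with u hu
  have : 0 < u := hu.1
  positivity

theorem withDensity_sqGammaDensity_Iio {a b z : ℝ} (ha : -1 < a) (hb : 0 < b) (hz : 0 ≤ z) :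
    volume.withDensity (fun x => ENNReal.ofReal (sqGammaDensity a b x)) (Iio ((b * z) ^ 2))
      = ENNReal.ofReal (lincGamma (a + 1) z / Real.Gamma (a + 1)) := by
  rw [← lintegral_indicator_one measurableSet_Iio, lintegral_withDensity_sqGammaDensity hb,
    ofReal_lincGamma_div_Gamma ha hz, ← Ioi_inter_Iio, inter_comm,
    ← Measure.restrict_restrict measurableSet_Iio, ← lintegral_indicator measurableSet_Iio]
  refine setLIntegral_congr_fun measurableSet_Ioi fun u (hu : 0 < u) => ?_
  have hlt : (b * u) ^ 2 < (b * z) ^ 2 ↔ u < z := by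
    rw [pow_lt_pow_iff_left₀ (by positivity) (by positivity) two_ne_zero, mul_lt_mul_iff_right₀ hb]
  by_cases huz : u < z <;> simp [indicator, hlt, huz]

theorem ProbabilityTheory.IndepFun.measure_preimage_eq_lintegral {Ω β β' : Type*}
    [MeasurableSpace Ω] [MeasurableSpace β] [MeasurableSpace β'] {μ : Measure Ω}
    [IsFiniteMeasure μ] {X : Ω → β} {Y : Ω → β'} (hX : Measurable X) (hY : Measurable Y)
    (hXY : IndepFun X Y μ) {S : Set (β × β')} (hS : MeasurableSet S) :
    μ ((fun ω => (X ω, Y ω)) ⁻¹' S) = ∫⁻ x, μ.map Y (Prod.mk x ⁻¹' S) ∂μ.map X := by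
  rw [← Measure.map_apply (hX.prodMk hY) hS,
    (indepFun_iff_map_prod_eq_prod_map_map hX.aemeasurable hY.aemeasurable).1 hXY,
    Measure.prod_apply hS]

theorem measure_mul_lt_eq_setLIntegral_lincGamma {Ω : Type*} [MeasurableSpace Ω]
    {μ : Measure Ω} [IsFiniteMeasure μ] {aX aY bX bY K : ℝ} (haX : -1 < aX) (haY : -1 < aY)
    (hbX : 0 < bX) (hbY : 0 < bY) (hK : 0 < K) {X Y : Ω → ℝ} (hX : Measurable X)
    (hY : Measurable Y) (hXY : IndepFun X Y μ)
    (hXlaw : μ.map X = volume.withDensity (fun x => ENNReal.ofReal (sqGammaDensity aX bX x)))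
    (hYlaw : μ.map Y = volume.withDensity (fun y => ENNReal.ofReal (sqGammaDensity aY bY y))) :
    μ {ω | X ω * Y ω < K} = ∫⁻ t in Ioi 0, ENNReal.ofReal
      (t ^ aX * Real.exp (-t) / Real.Gamma (aX + 1)
        * (lincGamma (aY + 1) (Real.sqrt K / (bX * bY * t)) / Real.Gamma (aY + 1))) := by
  have hS : MeasurableSet {p : ℝ × ℝ | p.1 * p.2 < K} :=
    measurableSet_lt (by fun_prop) (by fun_prop)
  rw [show {ω | X ω * Y ω < K} = (fun ω => (X ω, Y ω)) ⁻¹' {p | p.1 * p.2 < K} from rfl,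
    hXY.measure_preimage_eq_lintegral hX hY hS, hXlaw, lintegral_withDensity_sqGammaDensity hbX]
  refine setLIntegral_congr_fun measurableSet_Ioi fun t (ht : 0 < t) => ?_
  set z := Real.sqrt K / (bX * bY * t)
  have hslice : Prod.mk ((bX * t) ^ 2) ⁻¹' {p : ℝ × ℝ | p.1 * p.2 < K} = Iio ((bY * z) ^ 2) := by
    have hz : (bY * z) ^ 2 = K / (bX * t) ^ 2 := by
      simp only [z]
      field_simp
      rw [Real.sq_sqrt hK.le]
    ext y
    simp only [mem_preimage, mem_ofPred_eq, mem_Iio, hz,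
      lt_div_iff₀ (by positivity : 0 < (bX * t) ^ 2), mul_comm]
  have := Real.Gamma_pos_of_pos (by linarith : 0 < aX + 1)
  rw [hslice, hYlaw, withDensity_sqGammaDensity_Iio haY hbY (by positivity),
    ← ENNReal.ofReal_mul (by positivity)]

theorem toReal_measure_mul_lt_eq_setIntegral_lincGamma {Ω : Type*} [MeasurableSpace Ω]
    {μ : Measure Ω} [IsFiniteMeasure μ] {aX aY bX bY K : ℝ} (haX : -1 < aX) (haY : -1 < aY)
    (hbX : 0 < bX) (hbY : 0 < bY) (hK : 0 < K) {X Y : Ω → ℝ} (hX : Measurable X)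
    (hY : Measurable Y) (hXY : IndepFun X Y μ)
    (hXlaw : μ.map X = volume.withDensity (fun x => ENNReal.ofReal (sqGammaDensity aX bX x)))
    (hYlaw : μ.map Y = volume.withDensity (fun y => ENNReal.ofReal (sqGammaDensity aY bY y))) :
    (μ {ω | X ω * Y ω < K}).toReal = ∫ t in Ioi 0,
      t ^ aX * Real.exp (-t) / Real.Gamma (aX + 1)
        * (lincGamma (aY + 1) (Real.sqrt K / (bX * bY * t)) / Real.Gamma (aY + 1)) := by
  have hΓX := Real.Gamma_pos_of_pos (by linarith : 0 < aX + 1)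
  have hΓY := Real.Gamma_pos_of_pos (by linarith : 0 < aY + 1)
  have hanti : AntitoneOn (fun t => lincGamma (aY + 1) (Real.sqrt K / (bX * bY * t))) (Ioi 0) :=
    (lincGamma_monotoneOn haY).comp_AntitoneOn (fun s (hs : 0 < s) t _ hst => by gcongr)
      fun t (ht : 0 < t) => mem_Ici.2 (by positivity)
  have hmeas : AEMeasurable (fun t => t ^ aX * Real.exp (-t) / Real.Gamma (aX + 1)
      * (lincGamma (aY + 1) (Real.sqrt K / (bX * bY * t)) / Real.Gamma (aY + 1)))
      (volume.restrict (Ioi 0)) :=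
    (by fun_prop : Measurable fun t : ℝ => t ^ aX * Real.exp (-t) / Real.Gamma (aX + 1))
      |>.aemeasurable.mul
        ((aemeasurable_restrict_of_antitoneOn measurableSet_Ioi hanti).div_const _)
  have hnonneg : ∀ᵐ t ∂volume.restrict (Ioi 0), 0 ≤ t ^ aX * Real.exp (-t) / Real.Gamma (aX + 1)
      * (lincGamma (aY + 1) (Real.sqrt K / (bX * bY * t)) / Real.Gamma (aY + 1)) := by
    filter_upwards [ae_restrict_mem measurableSet_Ioi] with t (ht : 0 < t)
    have := lincGamma_nonneg (aY + 1) (by positivity : 0 ≤ Real.sqrt K / (bX * bY * t))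
    positivity
  rw [integral_eq_lintegral_of_nonneg_ae hnonneg hmeas.aestronglyMeasurable,
    measure_mul_lt_eq_setLIntegral_lincGamma haX haY hbX hbY hK hX hY hXY hXlaw hYlaw]

/-- exact (pre-quadrature) form of Theorem 3 of the paper: the outage
probability of the φ-th user in the PRIS-ARIS-OMA benchmark, with OMA target SNR
threshold `γ^OMA = 2^{2R} − 1`. -/
theorem outage_OMA {α : Type*} [MeasurableSpace α]
    (μ : Measure α) [IsProbabilityMeasure μ]
    (aX aY bX bY : ℝ) (haX : -1 < aX) (haY : -1 < aY) (hbX : 0 < bX) (hbY : 0 < bY)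
    (X Y : α → ℝ) (hX : Measurable X) (hY : Measurable Y)
    (hXY : IndepFun X Y μ)
    (hXlaw : Measure.map X μ =
      volume.withDensity (fun x => ENNReal.ofReal (sqGammaDensity aX bX x)))
    (hYlaw : Measure.map Y μ =
      volume.withDensity (fun y => ENNReal.ofReal (sqGammaDensity aY bY y)))
    (lam β P c aphi R : ℝ) (hlam : 0 < lam) (hβ : 0 < β) (hP : 0 < P) (hc : 0 < c)
    (haphi : 0 < aphi) (hR : 0 < R)
    (gOMA : ℝ) (hgOMA : gOMA = 2 ^ (2 * R) - 1) :
    (μ {ω | β * P * aphi * X ω * Y ω / (lam * c) < gOMA}).toReal =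
      (1 / Real.Gamma (aX + 1)) *
        ∫ t in Set.Ioi (0 : ℝ),
          t ^ aX * Real.exp (-t) *
            (lincGamma (aY + 1)
                (Real.sqrt (lam * gOMA * c / (β * P * aphi)) / (bX * bY * t)) /
              Real.Gamma (aY + 1)) := by
  have hgOMA_pos : 0 < gOMA := by
    rw [hgOMA, sub_pos]
    exact Real.one_lt_rpow one_lt_two (by positivity)
  have hevent : {ω | β * P * aphi * X ω * Y ω / (lam * c) < gOMA}
      = {ω | X ω * Y ω < lam * gOMA * c / (β * P * aphi)} := by
    ext ω
    simp only [mem_ofPred_eq, div_lt_iff₀ (by positivity : 0 < lam * c),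
      lt_div_iff₀ (by positivity : 0 < β * P * aphi)]
    ring_nf
  rw [hevent, toReal_measure_mul_lt_eq_setIntegral_lincGamma haX haY hbX hbY (by positivity)
    hX hY hXY hXlaw hYlaw, ← integral_const_mul]
  exact setIntegral_congr_fun measurableSet_Ioi fun t _ => by ring
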